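/- For all u, v, u′, v′ ∈ ℂ with u, v, u′, v′ ≠ 0 and all g, h ∈ P, one has χ(g(ρ₁(u,v))) ≠ χ(h(ρ₂(u′,v′))), where ρ₁(u,v) := (D(v), D(u), J, [[0,u²],[−u⁻²,0]]) and ρ₂(u′,v′) := (J, D(v′), D(u′), D(v′)) in (SL₂(ℂ))⁴. (This is the statement that the families ρ₁ and ρ₂ give pairwise distinct pure mapping class group orbits in the character variety Char(0,5).) -/

import Mathlib

noncomputable section

/-- `SL₂(ℂ)`: the group of 2×2 complex matrices of determinant 1. -/
abbrev SL2 : Type := Matrix.SpecialLinearGroup (Fin 2) ℂ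

/-- The element of `SL₂(ℂ)` with entries `a b c d`, given a proof of determinant one. -/
def mk2 (a b c d : ℂ) (h : a * d - b * c = 1) : SL2 :=
  ⟨!![a, b; c, d], by rw [Matrix.det_fin_two_of]; exact h⟩

/-- The matrix `J = [[0,1],[−1,0]]` in `SL₂(ℂ)`. -/
def J : SL2 := mk2 0 1 (-1) 0 (by norm_num)

/-- The diagonal matrix `D(u) = [[u,0],[0,u⁻¹]]` in `SL₂(ℂ)`, for `u ≠ 0`. -/
def D (u : ℂ) (hu : u ≠ 0) : SL2 := mk2 u 0 0 u⁻¹ (by field_simp; norm_num)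

/-- Quadruples of elements of `SL₂(ℂ)`. -/
abbrev S4 : Type := SL2 × SL2 × SL2 × SL2

/-- The braid/Hurwitz action of `σ₁` as a bijection of `S4`. -/
def β1 : Equiv.Perm S4 where
  toFun M := (M.1 * M.2.1 * M.1⁻¹, M.1, M.2.2.1, M.2.2.2)
  invFun N := (N.2.1, N.2.1⁻¹ * N.1 * N.2.1, N.2.2.1, N.2.2.2)
  left_inv := by rintro ⟨a, b, c, d⟩; simp [mul_assoc]
  right_inv := by rintro ⟨a, b, c, d⟩; simp [mul_assoc]

/-- The braid/Hurwitz action of `σ₂` as a bijection of `S4`. -/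
def β2 : Equiv.Perm S4 where
  toFun M := (M.1, M.2.1 * M.2.2.1 * M.2.1⁻¹, M.2.1, M.2.2.2)
  invFun N := (N.1, N.2.2.1, N.2.2.1⁻¹ * N.2.1 * N.2.2.1, N.2.2.2)
  left_inv := by rintro ⟨a, b, c, d⟩; simp [mul_assoc]
  right_inv := by rintro ⟨a, b, c, d⟩; simp [mul_assoc]

/-- The braid/Hurwitz action of `σ₃` as a bijection of `S4`. -/
def β3 : Equiv.Perm S4 where
  toFun M := (M.1, M.2.1, M.2.2.1 * M.2.2.2 * M.2.2.1⁻¹, M.2.2.1)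
  invFun N := (N.1, N.2.1, N.2.2.2, N.2.2.2⁻¹ * N.2.2.1 * N.2.2.2)
  left_inv := by rintro ⟨a, b, c, d⟩; simp [mul_assoc]
  right_inv := by rintro ⟨a, b, c, d⟩; simp [mul_assoc]

/-- The subgroup of bijections of `S4` generated by the images of the standard
generators of the pure braid group `PB₄`. -/
def P : Subgroup (Equiv.Perm S4) :=
  Subgroup.closure {β1 ^ 2, β2 ^ 2, β3 ^ 2,
    β2 * β1 ^ 2 * β2⁻¹, β3 * β2 ^ 2 * β3⁻¹, β3 * β2 * β1 ^ 2 * β2⁻¹ * β3⁻¹}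

/-- The trace of an element of `SL₂(ℂ)`. -/
def tr (A : SL2) : ℂ := Matrix.trace (A : Matrix (Fin 2) (Fin 2) ℂ)

/-- The 15 trace coordinates on `S4` determining a point of the character variety
`Char(0,5)`. -/
def χ (M : S4) : Fin 15 → ℂ :=
  ![tr M.1, tr M.2.1, tr M.2.2.1, tr M.2.2.2,
    tr (M.1 * M.2.1 * M.2.2.1 * M.2.2.2),
    tr (M.1 * M.2.1), tr (M.1 * M.2.2.1), tr (M.1 * M.2.2.2),
    tr (M.2.1 * M.2.2.1), tr (M.2.1 * M.2.2.2), tr (M.2.2.1 * M.2.2.2),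
    tr (M.1 * M.2.1 * M.2.2.1), tr (M.1 * M.2.1 * M.2.2.2),
    tr (M.1 * M.2.2.1 * M.2.2.2), tr (M.2.1 * M.2.2.1 * M.2.2.2)]

/-!
Every pure braid keeps each entry of a quadruple in its conjugacy class and fixes the product
of the four entries, so the traces `tr Mᵢ` and `tr (M₁M₂M₃M₄)` are constant on orbits of `P`.
Comparing them for `ρ₁` and `ρ₂` forces `u + u⁻¹ = v + v⁻¹ = 0`, i.e. `u² = v² = -1`; then the
product of `ρ₁`, which is `diag(-v/u, -u/v)`, has trace `2/(uv) ≠ 0`, while the product of `ρ₂`,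
`J · D(u′v′²)`, has trace `0`.
-/

def quadProd (M : S4) : SL2 := M.1 * M.2.1 * M.2.2.1 * M.2.2.2

def conjClassPreserving : Subgroup (Equiv.Perm S4) where
  carrier := {g | ∀ M : S4, IsConj M.1 (g M).1 ∧ IsConj M.2.1 (g M).2.1 ∧
    IsConj M.2.2.1 (g M).2.2.1 ∧ IsConj M.2.2.2 (g M).2.2.2 ∧ quadProd (g M) = quadProd M}
  one_mem' M := ⟨.refl _, .refl _, .refl _, .refl _, rfl⟩
  mul_mem' {g h} hg hh M := by
    obtain ⟨h1, h2, h3, h4, h5⟩ := hh M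
    obtain ⟨g1, g2, g3, g4, g5⟩ := hg (h M)
    exact ⟨h1.trans g1, h2.trans g2, h3.trans g3, h4.trans g4, g5.trans h5⟩
  inv_mem' {g} hg M := by
    obtain ⟨g1, g2, g3, g4, g5⟩ := hg (g⁻¹ M)
    simp only [Equiv.Perm.coe_inv, Equiv.apply_symm_apply] at g1 g2 g3 g4 g5
    exact ⟨g1.symm, g2.symm, g3.symm, g4.symm, g5.symm⟩

section Generators

open Equiv.Perm

lemma sq_β1_mem_conjClassPreserving : β1 ^ 2 ∈ conjClassPreserving := by
  rintro ⟨a, b, c, d⟩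
  simp only [sq, mul_apply, β1, Equiv.coe_fn_mk, quadProd]
  exact ⟨isConj_iff.mpr ⟨a * b * a⁻¹, by group⟩, isConj_iff.mpr ⟨a, by group⟩,
    .refl _, .refl _, by group⟩

lemma sq_β2_mem_conjClassPreserving : β2 ^ 2 ∈ conjClassPreserving := by
  rintro ⟨a, b, c, d⟩
  simp only [sq, mul_apply, β2, Equiv.coe_fn_mk, quadProd]
  exact ⟨.refl _, isConj_iff.mpr ⟨b * c * b⁻¹, by group⟩, isConj_iff.mpr ⟨b, by group⟩,
    .refl _, by group⟩

lemma sq_β3_mem_conjClassPreserving : β3 ^ 2 ∈ conjClassPreserving := by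
  rintro ⟨a, b, c, d⟩
  simp only [sq, mul_apply, β3, Equiv.coe_fn_mk, quadProd]
  exact ⟨.refl _, .refl _, isConj_iff.mpr ⟨c * d * c⁻¹, by group⟩,
    isConj_iff.mpr ⟨c, by group⟩, by group⟩

lemma β2_sq_β1_β2_inv_mem_conjClassPreserving :
    β2 * β1 ^ 2 * β2⁻¹ ∈ conjClassPreserving := by
  rintro ⟨a, b, c, d⟩
  simp only [sq, mul_apply, β1, β2, Equiv.coe_fn_mk, inv_def, Equiv.coe_fn_symm_mk, quadProd]
  exact ⟨isConj_iff.mpr ⟨a * c * a⁻¹, by group⟩, isConj_iff.mpr ⟨a * c * a⁻¹ * c⁻¹, by group⟩,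
    isConj_iff.mpr ⟨a, by group⟩, .refl _, by group⟩

lemma β3_sq_β2_β3_inv_mem_conjClassPreserving :
    β3 * β2 ^ 2 * β3⁻¹ ∈ conjClassPreserving := by
  rintro ⟨a, b, c, d⟩
  simp only [sq, mul_apply, β2, β3, Equiv.coe_fn_mk, inv_def, Equiv.coe_fn_symm_mk, quadProd]
  exact ⟨.refl _, isConj_iff.mpr ⟨b * d * b⁻¹, by group⟩,
    isConj_iff.mpr ⟨b * d * b⁻¹ * d⁻¹, by group⟩, isConj_iff.mpr ⟨b, by group⟩, by group⟩

lemma β3_β2_sq_β1_β2_inv_β3_inv_mem_conjClassPreserving :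
    β3 * β2 * β1 ^ 2 * β2⁻¹ * β3⁻¹ ∈ conjClassPreserving := by
  rintro ⟨a, b, c, d⟩
  simp only [sq, mul_apply, β1, β2, β3, Equiv.coe_fn_mk, inv_def, Equiv.coe_fn_symm_mk,
    quadProd]
  exact ⟨isConj_iff.mpr ⟨a * d * a⁻¹, by group⟩, isConj_iff.mpr ⟨a * d * a⁻¹ * d⁻¹, by group⟩,
    isConj_iff.mpr ⟨a * d * a⁻¹ * d⁻¹, by group⟩, isConj_iff.mpr ⟨a, by group⟩, by group⟩

end Generators

lemma P_le_conjClassPreserving : P ≤ conjClassPreserving := by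
  refine (Subgroup.closure_le _).mpr ?_
  rintro x (rfl | rfl | rfl | rfl | rfl | rfl)
  exacts [sq_β1_mem_conjClassPreserving, sq_β2_mem_conjClassPreserving,
    sq_β3_mem_conjClassPreserving, β2_sq_β1_β2_inv_mem_conjClassPreserving,
    β3_sq_β2_β3_inv_mem_conjClassPreserving, β3_β2_sq_β1_β2_inv_β3_inv_mem_conjClassPreserving]

lemma tr_eq_of_isConj {A B : SL2} (h : IsConj A B) : tr A = tr B := by
  obtain ⟨c, rfl⟩ := isConj_iff.mp h
  rw [tr, tr, Matrix.SpecialLinearGroup.coe_mul, Matrix.trace_mul_comm,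
    ← Matrix.SpecialLinearGroup.coe_mul, inv_mul_cancel_left]

/-- Traces of the monodromies around the five punctures. -/
def boundaryTraces (M : S4) : Fin 5 → ℂ :=
  ![tr M.1, tr M.2.1, tr M.2.2.1, tr M.2.2.2, tr (quadProd M)]

lemma boundaryTraces_eq_of_χ_eq {M N : S4} (h : χ M = χ N) :
    boundaryTraces M = boundaryTraces N := by
  funext i
  fin_cases i
  exacts [congrFun h 0, congrFun h 1, congrFun h 2, congrFun h 3, congrFun h 4]

lemma boundaryTraces_apply_of_mem_conjClassPreserving {g : Equiv.Perm S4}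
    (hg : g ∈ conjClassPreserving) (M : S4) : boundaryTraces (g M) = boundaryTraces M := by
  obtain ⟨h1, h2, h3, h4, h5⟩ := hg M
  simp only [boundaryTraces, tr_eq_of_isConj h1, tr_eq_of_isConj h2, tr_eq_of_isConj h3,
    tr_eq_of_isConj h4, h5]

@[simp]
lemma coe_mk2 (a b c d : ℂ) (h : a * d - b * c = 1) :
    (mk2 a b c d h : Matrix (Fin 2) (Fin 2) ℂ) = !![a, b; c, d] :=
  rfl

lemma tr_mk2 (a b c d : ℂ) (h : a * d - b * c = 1) : tr (mk2 a b c d h) = a + d := by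
  simp [tr, Matrix.trace_fin_two_of]

lemma tr_J : tr J = 0 := by
  simp [J, tr_mk2]

lemma tr_D (u : ℂ) (hu : u ≠ 0) : tr (D u hu) = u + u⁻¹ := by
  simp [D, tr_mk2]

lemma tr_D_mul_D_mul_J_mul_antidiag (u v : ℂ) (hu : u ≠ 0) (hv : v ≠ 0)
    (h : 0 * 0 - u ^ 2 * -(u ^ 2)⁻¹ = 1) :
    tr (D v hv * D u hu * J * mk2 0 (u ^ 2) (-(u ^ 2)⁻¹) 0 h) = -(v * u⁻¹ + u * v⁻¹) := by
  simp [tr, D, J, Matrix.trace_fin_two_of]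
  field_simp
  ring

lemma tr_J_mul_D_mul_D_mul_D (u v w : ℂ) (hu : u ≠ 0) (hv : v ≠ 0) (hw : w ≠ 0) :
    tr (J * D u hu * D v hv * D w hw) = 0 := by
  simp [tr, D, J, Matrix.trace_fin_two_of]

lemma mul_inv_add_mul_inv_ne_zero_of_add_inv_eq_zero {u v : ℂ} (hu0 : u ≠ 0) (hv0 : v ≠ 0)
    (hu : u + u⁻¹ = 0) (hv : v + v⁻¹ = 0) : v * u⁻¹ + u * v⁻¹ ≠ 0 := by
  field_simp at hu hv ⊢
  have hu2 : u ^ 2 = -1 := by linear_combination hu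
  have hv2 : v ^ 2 = -1 := by linear_combination hv
  rw [hu2, hv2]
  norm_num
  exact ⟨hu0, hv0⟩

/-- The pure mapping class group orbits in `Char(0,5)` of the families
`ρ₁(u,v) = (D(v), D(u), J, [[0,u²],[−u⁻²,0]])` and `ρ₂(u′,v′) = (J, D(v′), D(u′), D(v′))`
are pairwise distinct. -/
theorem rho1_rho2_orbits_distinct (u v u' v' : ℂ)
    (hu : u ≠ 0) (hv : v ≠ 0) (hu' : u' ≠ 0) (hv' : v' ≠ 0)
    (g h : Equiv.Perm S4) (hg : g ∈ P) (hh : h ∈ P) :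
    χ (g (D v hv, D u hu, J, mk2 0 (u ^ 2) (-(u ^ 2)⁻¹) 0 (by field_simp; norm_num))) ≠
    χ (h (J, D v' hv', D u' hu', D v' hv')) := by
  intro hχ
  have hb := boundaryTraces_eq_of_χ_eq hχ
  rw [boundaryTraces_apply_of_mem_conjClassPreserving (P_le_conjClassPreserving hg),
    boundaryTraces_apply_of_mem_conjClassPreserving (P_le_conjClassPreserving hh)] at hb
  have e0 := congrFun hb 0
  have e1 := congrFun hb 1
  have e3 := congrFun hb 3
  have e4 := congrFun hb 4
  simp only [boundaryTraces, quadProd, Matrix.cons_val, tr_D, tr_J, tr_mk2, zero_add,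
    tr_D_mul_D_mul_J_mul_antidiag, tr_J_mul_D_mul_D_mul_D] at e0 e1 e3 e4
  exact mul_inv_add_mul_inv_ne_zero_of_add_inv_eq_zero hu hv (e1.trans e3.symm) e0
    (neg_eq_zero.mp e4)
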